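/- arXiv:1911.10247 — 5 statements merged into one kernel-verified Lean document; each statement's English description precedes it below -/
import Mathlib

section
/- Let H_T, H_P be invertible n×n complex matrices and M_1, M_2 be n×n complex matrices, A = [[H_T, M_1],[M_2, H_P]], and Π_J = [[H_T,0],[0,H_P]]. If λ ≠ 1 is a generalized eigenvalue of A with respect to Π_J, then (λ-1)² is an eigenvalue of the matrix H_T⁻¹ M_1 H_P⁻¹ M_2. Conversely, if μ is an eigenvalue of H_T⁻¹ M_1 H_P⁻¹ M_2, then 1 + √μ and 1 - √μ are generalized eigenvalues of A with respect to Π_J. -/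
open Matrix

/-- `lam` is a generalized eigenvalue of `A` with respect to `Pi`. -/
def IsGenEig {m : Type*} [Fintype m] (A Pi : Matrix m m ℂ) (lam : ℂ) : Prop :=
  ∃ x : m → ℂ, x ≠ 0 ∧ A.mulVec x = lam • Pi.mulVec x

/-- `mu` is an eigenvalue of `B`. -/
def IsEig {m : Type*} [Fintype m] (B : Matrix m m ℂ) (mu : ℂ) : Prop :=
  ∃ y : m → ℂ, y ≠ 0 ∧ B.mulVec y = mu • y

lemma conv_aux {n : ℕ} (HT HP M1 M2 : Matrix (Fin n) (Fin n) ℂ)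
    (hHT : IsUnit HT) (hHP : IsUnit HP) (s : ℂ)
    (h : IsEig (HT⁻¹ * M1 * HP⁻¹ * M2) (s ^ 2)) :
    IsGenEig (Matrix.fromBlocks HT M1 M2 HP) (Matrix.fromBlocks HT 0 0 HP) (1 + s) := by
  have hHTd : IsUnit HT.det := (Matrix.isUnit_iff_isUnit_det HT).1 hHT
  have hHPd : IsUnit HP.det := (Matrix.isUnit_iff_isUnit_det HP).1 hHP
  obtain ⟨y, hy0, hy⟩ := h
  by_cases hM2 : M2.mulVec y = 0
  · -- then s ^ 2 = 0, use x = (y, 0) with eigenvalue 1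
    have hB : (HT⁻¹ * M1 * HP⁻¹ * M2).mulVec y = 0 := by
      rw [← Matrix.mulVec_mulVec, hM2, Matrix.mulVec_zero]
    have hs2 : s ^ 2 • y = 0 := by rw [← hy, hB]
    have hs : s = 0 := by
      rcases smul_eq_zero.1 hs2 with h | h
      · exact pow_eq_zero_iff (n := 2) (by norm_num) |>.1 h
      · exact absurd h hy0
    refine ⟨Sum.elim y 0, ?_, ?_⟩
    · intro hx
      apply hy0
      funext i
      exact congrFun hx (Sum.inl i)
    · rw [Matrix.fromBlocks_mulVec, Matrix.fromBlocks_mulVec, hs]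
      simp [hM2]
  · -- general construction  x = (s • y, HP⁻¹ M2 y)
    refine ⟨Sum.elim (s • y) (HP⁻¹.mulVec (M2.mulVec y)), ?_, ?_⟩
    · intro hx
      apply hM2
      have h2 : HP⁻¹.mulVec (M2.mulVec y) = 0 := by
        funext i
        exact congrFun hx (Sum.inr i)
      have := congrArg (HP.mulVec) h2
      rwa [Matrix.mulVec_mulVec, Matrix.mul_nonsing_inv HP hHPd, Matrix.one_mulVec,
        Matrix.mulVec_zero] at this
    · rw [Matrix.fromBlocks_mulVec, Matrix.fromBlocks_mulVec]
      have key : M1.mulVec (HP⁻¹.mulVec (M2.mulVec y)) = s ^ 2 • HT.mulVec y := by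
        have hmm : HT * (HT⁻¹ * M1 * HP⁻¹ * M2) = M1 * HP⁻¹ * M2 := by
          rw [Matrix.mul_assoc (HT⁻¹ * M1), Matrix.mul_assoc HT⁻¹,
            Matrix.mul_nonsing_inv_cancel_left HT _ hHTd, ← Matrix.mul_assoc]
        have h3 : (M1 * HP⁻¹ * M2).mulVec y
            = HT.mulVec ((HT⁻¹ * M1 * HP⁻¹ * M2).mulVec y) := by
          rw [Matrix.mulVec_mulVec, hmm]
        rw [Matrix.mulVec_mulVec, Matrix.mulVec_mulVec, h3, hy, Matrix.mulVec_smul]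
      have key2 : HP.mulVec (HP⁻¹.mulVec (M2.mulVec y)) = M2.mulVec y := by
        rw [Matrix.mulVec_mulVec, Matrix.mul_nonsing_inv HP hHPd, Matrix.one_mulVec]
      simp only [Sum.elim_comp_inl, Sum.elim_comp_inr]
      funext i
      cases i with
      | inl i =>
        simp only [Sum.elim_inl, Pi.add_apply, Pi.smul_apply, Matrix.zero_mulVec,
          Matrix.mulVec_smul, key, key2, Pi.zero_apply, add_zero, smul_eq_mul]
        ring
      | inr i =>
        simp only [Sum.elim_inr, Pi.add_apply, Pi.smul_apply, Matrix.zero_mulVec,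
          Matrix.mulVec_smul, key, key2, Pi.zero_apply, zero_add, smul_eq_mul]
        ring

/-- for the block-Jacobi preconditioner `Π_J = [[H_T,0],[0,H_P]]`,
a generalized eigenvalue `λ ≠ 1` of `A = [[H_T,M_1],[M_2,H_P]]` gives the eigenvalue
`(λ-1)²` of `H_T⁻¹ M_1 H_P⁻¹ M_2`; conversely an eigenvalue `μ = s²` of that matrix
gives generalized eigenvalues `1 + s` and `1 - s` (for either square root `s` of `μ`). -/
theorem stmt1 {n : ℕ} (HT HP M1 M2 : Matrix (Fin n) (Fin n) ℂ)
    (hHT : IsUnit HT) (hHP : IsUnit HP) :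
    (∀ lam : ℂ, lam ≠ 1 →
      IsGenEig (Matrix.fromBlocks HT M1 M2 HP) (Matrix.fromBlocks HT 0 0 HP) lam →
      IsEig (HT⁻¹ * M1 * HP⁻¹ * M2) ((lam - 1) ^ 2)) ∧
    (∀ μ s : ℂ, s ^ 2 = μ →
      IsEig (HT⁻¹ * M1 * HP⁻¹ * M2) μ →
      IsGenEig (Matrix.fromBlocks HT M1 M2 HP) (Matrix.fromBlocks HT 0 0 HP) (1 + s) ∧
      IsGenEig (Matrix.fromBlocks HT M1 M2 HP) (Matrix.fromBlocks HT 0 0 HP) (1 - s)) := by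
  have hHTd : IsUnit HT.det := (Matrix.isUnit_iff_isUnit_det HT).1 hHT
  have hHPd : IsUnit HP.det := (Matrix.isUnit_iff_isUnit_det HP).1 hHP
  have hHPinj : Function.Injective HP.mulVec := Matrix.mulVec_injective_iff_isUnit.2 hHP
  constructor
  · rintro lam hlam ⟨x, hx0, hx⟩
    set u : Fin n → ℂ := x ∘ Sum.inl with hu
    set v : Fin n → ℂ := x ∘ Sum.inr with hv
    have hxe : x = Sum.elim u v := by funext i; cases i <;> rfl
    rw [hxe, Matrix.fromBlocks_mulVec, Matrix.fromBlocks_mulVec] at hx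
    have h1 : HT.mulVec u + M1.mulVec v = lam • HT.mulVec u := by
      funext i
      have := congrFun hx (Sum.inl i)
      simpa using this
    have h2 : M2.mulVec u + HP.mulVec v = lam • HP.mulVec v := by
      funext i
      have := congrFun hx (Sum.inr i)
      simpa using this
    have hm1 : M1.mulVec v = (lam - 1) • HT.mulVec u := by
      rw [sub_smul, one_smul]
      exact eq_sub_of_add_eq' h1
    have hm2 : M2.mulVec u = (lam - 1) • HP.mulVec v := by
      rw [sub_smul, one_smul]
      exact eq_sub_of_add_eq h2
    have hune : u ≠ 0 := by
      intro hu0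
      have hm2' : (lam - 1) • HP.mulVec v = 0 := by
        rw [← hm2, hu0, Matrix.mulVec_zero]
      have hpv : HP.mulVec v = 0 :=
        (smul_eq_zero.1 hm2').resolve_left (sub_ne_zero.2 hlam)
      have hv0 : v = 0 := hHPinj (by rw [hpv, Matrix.mulVec_zero])
      apply hx0
      rw [hxe, hu0, hv0]
      funext i; cases i <;> rfl
    refine ⟨u, hune, ?_⟩
    have step1 : HP⁻¹.mulVec (M2.mulVec u) = (lam - 1) • v := by
      rw [hm2, Matrix.mulVec_smul, Matrix.mulVec_mulVec,
        Matrix.nonsing_inv_mul HP hHPd, Matrix.one_mulVec]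
    have step2 : M1.mulVec ((lam - 1) • v) = (lam - 1) ^ 2 • HT.mulVec u := by
      rw [Matrix.mulVec_smul, hm1, smul_smul, ← pow_two]
    have hrw : (HT⁻¹ * M1 * HP⁻¹ * M2).mulVec u
        = HT⁻¹.mulVec (M1.mulVec (HP⁻¹.mulVec (M2.mulVec u))) := by
      simp only [Matrix.mulVec_mulVec, Matrix.mul_assoc]
    rw [hrw, step1, step2, Matrix.mulVec_smul, Matrix.mulVec_mulVec,
      Matrix.nonsing_inv_mul HT hHTd, Matrix.one_mulVec]
  · rintro μ s hsμ h
    have h' : IsEig (HT⁻¹ * M1 * HP⁻¹ * M2) (s ^ 2) := hsμ ▸ h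
    have h'' : IsEig (HT⁻¹ * M1 * HP⁻¹ * M2) ((-s) ^ 2) := by
      rwa [neg_pow, Even.neg_one_pow (by norm_num), one_mul]
    refine ⟨conv_aux HT HP M1 M2 hHT hHP s h', ?_⟩
    have := conv_aux HT HP M1 M2 hHT hHP (-s) h''
    rwa [← sub_eq_add_neg] at this
end

section
/- Let H_T, H_P be invertible n×n complex matrices and M_1, M_2 be n×n complex matrices, A = [[H_T, M_1],[M_2, H_P]], Π_GS = [[H_T, 0],[M_2, H_P]]. If λ ≠ 1 is a generalized eigenvalue of A with respect to Π_GS, then μ = 1 - λ is an eigenvalue of H_T⁻¹ M_1 H_P⁻¹ M_2. Conversely if μ ≠ 0 is an eigenvalue of H_T⁻¹ M_1 H_P⁻¹ M_2 then λ = 1 - μ is a generalized eigenvalue of A with respect to Π_GS. -/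
open Matrix

/-- for the block Gauss-Seidel preconditioner
`Π_GS = [[H_T,0],[M_2,H_P]]`: if `λ ≠ 1` is a generalized eigenvalue of
`A = [[H_T,M_1],[M_2,H_P]]` then `μ = 1 - λ` is an eigenvalue of
`H_T⁻¹ M_1 H_P⁻¹ M_2`; conversely a nonzero eigenvalue `μ` of that matrix
yields the generalized eigenvalue `λ = 1 - μ`. -/
theorem stmt3 {n : ℕ} (HT HP M1 M2 : Matrix (Fin n) (Fin n) ℂ)
    (hHT : IsUnit HT) (hHP : IsUnit HP) :
    (∀ lam : ℂ, lam ≠ 1 →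
      IsGenEig (Matrix.fromBlocks HT M1 M2 HP) (Matrix.fromBlocks HT 0 M2 HP) lam →
      IsEig (HT⁻¹ * M1 * HP⁻¹ * M2) (1 - lam)) ∧
    (∀ μ : ℂ, μ ≠ 0 →
      IsEig (HT⁻¹ * M1 * HP⁻¹ * M2) μ →
      IsGenEig (Matrix.fromBlocks HT M1 M2 HP) (Matrix.fromBlocks HT 0 M2 HP) (1 - μ)) := by
  have hTdet : IsUnit HT.det := (Matrix.isUnit_iff_isUnit_det HT).mp hHT
  have hPdet : IsUnit HP.det := (Matrix.isUnit_iff_isUnit_det HP).mp hHP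
  have hTinv : HT⁻¹ * HT = 1 := Matrix.nonsing_inv_mul HT hTdet
  have hTinv' : HT * HT⁻¹ = 1 := Matrix.mul_nonsing_inv HT hTdet
  have hPinv : HP⁻¹ * HP = 1 := Matrix.nonsing_inv_mul HP hPdet
  have hPinv' : HP * HP⁻¹ = 1 := Matrix.mul_nonsing_inv HP hPdet
  constructor
  · rintro lam hlam ⟨x, hx, hAx⟩
    set u := x ∘ Sum.inl with hu
    set v := x ∘ Sum.inr with hv
    have h1 : HT.mulVec u + M1.mulVec v = lam • HT.mulVec u := by
      funext i
      have := congrFun hAx (Sum.inl i)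
      simpa [Matrix.fromBlocks_mulVec, u, v] using this
    have h2 : M2.mulVec u + HP.mulVec v = lam • (M2.mulVec u + HP.mulVec v) := by
      funext i
      have := congrFun hAx (Sum.inr i)
      simpa [Matrix.fromBlocks_mulVec, u, v, mul_add] using this
    have h3 : M2.mulVec u + HP.mulVec v = 0 := by
      have h4 : (1 - lam) • (M2.mulVec u + HP.mulVec v) = 0 := by
        rw [sub_smul, one_smul, ← h2, sub_self]
      have h5 : (1 : ℂ) - lam ≠ 0 := sub_ne_zero.mpr (Ne.symm hlam)
      exact (smul_eq_zero.mp h4).resolve_left h5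
    have hveq : v = -(HP⁻¹.mulVec (M2.mulVec u)) := by
      have : HP.mulVec v = -(M2.mulVec u) := by
        rw [eq_neg_iff_add_eq_zero, add_comm]; exact h3
      calc v = HP⁻¹.mulVec (HP.mulVec v) := by
              rw [Matrix.mulVec_mulVec, hPinv, Matrix.one_mulVec]
        _ = -(HP⁻¹.mulVec (M2.mulVec u)) := by rw [this, Matrix.mulVec_neg]
    have hune : u ≠ 0 := by
      intro h0
      apply hx
      have hv0 : v = 0 := by
        rw [hveq, h0, Matrix.mulVec_zero, Matrix.mulVec_zero, neg_zero]
      funext i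
      cases i with
      | inl i => exact congrFun h0 i
      | inr i => exact congrFun hv0 i
    refine ⟨u, hune, ?_⟩
    have hM1v : M1.mulVec v = (lam - 1) • HT.mulVec u := by
      have := h1
      rw [sub_smul, one_smul]
      linear_combination (norm := module) h1
    have key : (M1 * HP⁻¹ * M2).mulVec u = (1 - lam) • HT.mulVec u := by
      have : M1.mulVec v = -((M1 * HP⁻¹ * M2).mulVec u) := by
        rw [hveq, Matrix.mulVec_neg, Matrix.mulVec_mulVec, Matrix.mulVec_mulVec,
          Matrix.mul_assoc]
      rw [this] at hM1v
      linear_combination (norm := module) -hM1v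
    calc (HT⁻¹ * M1 * HP⁻¹ * M2).mulVec u
        = HT⁻¹.mulVec ((M1 * HP⁻¹ * M2).mulVec u) := by
          rw [Matrix.mulVec_mulVec, Matrix.mul_assoc, Matrix.mul_assoc, ← Matrix.mul_assoc M1]
      _ = (1 - lam) • u := by
          rw [key, Matrix.mulVec_smul, Matrix.mulVec_mulVec, hTinv, Matrix.one_mulVec]
  · rintro μ hμ ⟨u, hu, hBu⟩
    refine ⟨Sum.elim u (-(HP⁻¹.mulVec (M2.mulVec u))), ?_, ?_⟩
    · intro h
      apply hu
      funext i
      exact congrFun h (Sum.inl i)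
    · have key : (M1 * HP⁻¹ * M2).mulVec u = μ • HT.mulVec u := by
        have := congrArg (fun w => HT.mulVec w) hBu
        simpa [Matrix.mulVec_mulVec, Matrix.mulVec_smul, ← Matrix.mul_assoc, hTinv',
          Matrix.one_mul] using this
      funext i
      cases i with
      | inl i =>
        have lhs : (HT.mulVec u + M1.mulVec (-(HP⁻¹.mulVec (M2.mulVec u)))) i
            = ((1 - μ) • HT.mulVec u) i := by
          have hM1 : M1.mulVec (-(HP⁻¹.mulVec (M2.mulVec u))) = -(μ • HT.mulVec u) := by
            rw [Matrix.mulVec_neg, Matrix.mulVec_mulVec, Matrix.mulVec_mulVec, key]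
          rw [hM1]
          have : HT.mulVec u + -(μ • HT.mulVec u) = (1 - μ) • HT.mulVec u := by
            rw [sub_smul, one_smul]; abel
          rw [this]
        simpa [Matrix.fromBlocks_mulVec] using lhs
      | inr i =>
        have hHPv : HP.mulVec (-(HP⁻¹.mulVec (M2.mulVec u))) = -(M2.mulVec u) := by
          rw [Matrix.mulVec_neg, Matrix.mulVec_mulVec, hPinv', Matrix.one_mulVec]
        have lhs : (M2.mulVec u + HP.mulVec (-(HP⁻¹.mulVec (M2.mulVec u)))) i
            = ((1 - μ) • (M2.mulVec u + HP.mulVec (-(HP⁻¹.mulVec (M2.mulVec u))))) i := by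
          rw [hHPv, add_neg_cancel, smul_zero]
        simpa [Matrix.fromBlocks_mulVec, mul_add] using lhs
end

section
/- Under the hypotheses of the previous result (M Hermitian positive definite, H_T, H_P invertible with ‖H_T⁻¹M‖_M ≤ C_T, ‖H_P⁻¹M‖_M ≤ C_P, M_1 = i((γ-1)/γ)M, M_2 = γ(1-Λ/𝓜)M, γ > 1, 0 < Λ < 𝓜), every generalized eigenvalue λ of A = [[H_T,M_1],[M_2,H_P]] with respect to the block-diagonal preconditioner Π_J = [[H_T,0],[0,H_P]] satisfies |λ - 1| ≤ √(C_T C_P (γ-1)(1 - Λ/𝓜)). -/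
open Matrix
open scoped ComplexOrder

/-- The vector norm induced by a Hermitian positive definite matrix `M`:
`‖u‖_M = (u* M u)^{1/2}`. -/
noncomputable def vecNormM {n : ℕ} (M : Matrix (Fin n) (Fin n) ℂ) (u : Fin n → ℂ) : ℝ :=
  Real.sqrt (star u ⬝ᵥ M.mulVec u).re

/-- The matrix operator norm induced by the vector norm `‖·‖_M`. -/
noncomputable def opNormM {n : ℕ} (M A : Matrix (Fin n) (Fin n) ℂ) : ℝ :=
  sSup {r : ℝ | ∃ u : Fin n → ℂ, vecNormM M u = 1 ∧ r = vecNormM M (A.mulVec u)}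

/-! Write the generalized eigenvector as `(u, v)`. The two block rows say
`(λ - 1) u = c₁ H_T⁻¹M v` and `(λ - 1) v = c₂ H_P⁻¹M u` with `c₁ = i(γ-1)/γ`, `c₂ = γ(1-Λ/𝓜)`.
Taking `M`-norms gives `|λ-1| ‖u‖ ≤ |c₁| C_T ‖v‖` and `|λ-1| ‖v‖ ≤ |c₂| C_P ‖u‖`; chaining the two
(one of `‖u‖`, `‖v‖` is positive) yields `|λ-1|² ≤ |c₁| |c₂| C_T C_P = C_T C_P (γ-1)(1-Λ/𝓜)`. -/

open WithLp
open scoped MatrixOrder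

theorem Matrix.PosDef.exists_isUnit_conjTranspose_mul_self_eq {ι 𝕜 : Type*} [Fintype ι]
    [DecidableEq ι] [RCLike 𝕜] {M : Matrix ι ι 𝕜} (hM : M.PosDef) :
    ∃ S : Matrix ι ι 𝕜, IsUnit S ∧ Sᴴ * S = M := by
  obtain ⟨S, rfl⟩ := CStarAlgebra.nonneg_iff_eq_star_mul_self.mp hM.posSemidef.nonneg
  refine ⟨S, ?_, rfl⟩
  have hdet := (isUnit_iff_isUnit_det _).mp hM.isUnit
  rw [det_mul] at hdet
  exact (isUnit_iff_isUnit_det S).mpr (isUnit_of_mul_isUnit_right hdet)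

theorem Matrix.fromBlocks_mulVec_eq_smul_fromBlocks_diag_mulVec_iff {l m R : Type*} [Fintype l]
    [Fintype m] [CommRing R] {A : Matrix l l R} {B : Matrix l m R} {C : Matrix m l R}
    {D : Matrix m m R} {u : l → R} {v : m → R} {μ : R} :
    fromBlocks A B C D *ᵥ Sum.elim u v = μ • fromBlocks A 0 0 D *ᵥ Sum.elim u v ↔
      B *ᵥ v = (μ - 1) • A *ᵥ u ∧ C *ᵥ u = (μ - 1) • D *ᵥ v := by
  simp only [fromBlocks_mulVec, zero_mulVec, add_zero, zero_add, funext_iff, Sum.forall,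
    Sum.elim_comp_inl, Sum.elim_comp_inr, Sum.elim_inl, Sum.elim_inr,
    Pi.add_apply, Pi.smul_apply, smul_eq_mul, sub_mul, one_mul]
  constructor <;> rintro ⟨h₁, h₂⟩ <;> constructor <;> intro i <;>
    [linear_combination h₁ i; linear_combination h₂ i; linear_combination h₁ i;
      linear_combination h₂ i]

theorem Matrix.smul_eq_inv_mul_mulVec_of_mulVec_eq_smul_mulVec {ι R : Type*} [Fintype ι]
    [DecidableEq ι] [CommRing R] {A B : Matrix ι ι R} (hA : IsUnit A) {u v : ι → R} {μ : R}
    (h : B *ᵥ v = μ • A *ᵥ u) : μ • u = (A⁻¹ * B) *ᵥ v := by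
  rw [← mulVec_mulVec, h, mulVec_smul, mulVec_mulVec,
    nonsing_inv_mul A ((isUnit_iff_isUnit_det A).mp hA), one_mulVec]

theorem sq_le_mul_of_mul_le_mul_of_mul_le_mul {a α β p q : ℝ} (ha : 0 ≤ a) (hα : 0 ≤ α)
    (hβ : 0 ≤ β) (hpq : 0 < p ∨ 0 < q) (h₁ : a * p ≤ α * q) (h₂ : a * q ≤ β * p) :
    a ^ 2 ≤ α * β := by
  rcases hpq with hp | hq
  · refine le_of_mul_le_mul_right ?_ hp
    calc a ^ 2 * p = a * (a * p) := by ring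
      _ ≤ a * (α * q) := mul_le_mul_of_nonneg_left h₁ ha
      _ = α * (a * q) := by ring
      _ ≤ α * (β * p) := mul_le_mul_of_nonneg_left h₂ hα
      _ = α * β * p := by ring
  · refine le_of_mul_le_mul_right ?_ hq
    calc a ^ 2 * q = a * (a * q) := by ring
      _ ≤ a * (β * p) := mul_le_mul_of_nonneg_left h₂ ha
      _ = β * (a * p) := by ring
      _ ≤ β * (α * q) := mul_le_mul_of_nonneg_left h₁ hβ
      _ = α * β * q := by ring

section vecNormM

variable {n : ℕ} {M : Matrix (Fin n) (Fin n) ℂ}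

theorem vecNormM_eq_norm_toLp_mulVec {S : Matrix (Fin n) (Fin n) ℂ} (hS : Sᴴ * S = M)
    (u : Fin n → ℂ) : vecNormM M u = ‖toLp 2 (S *ᵥ u)‖ := by
  rw [vecNormM, ← hS, ← mulVec_mulVec, dotProduct_mulVec, ← star_mulVec, dotProduct_comm,
    ← EuclideanSpace.inner_eq_star_dotProduct, ← RCLike.re_eq_complex_re, ← norm_sq_eq_re_inner,
    Real.sqrt_sq (norm_nonneg _)]

theorem vecNormM_smul (M : Matrix (Fin n) (Fin n) ℂ) (c : ℂ) (u : Fin n → ℂ) :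
    vecNormM M (c • u) = ‖c‖ * vecNormM M u := by
  rw [vecNormM, vecNormM, star_smul, mulVec_smul, smul_dotProduct, dotProduct_smul,
    smul_smul, smul_eq_mul, Complex.star_def, Complex.conj_mul', ← Complex.ofReal_pow,
    Complex.re_ofReal_mul, Real.sqrt_mul (sq_nonneg _), Real.sqrt_sq (norm_nonneg _)]

@[simp]
theorem vecNormM_zero (M : Matrix (Fin n) (Fin n) ℂ) : vecNormM M 0 = 0 := by
  simp [vecNormM]

theorem vecNormM_nonneg (M : Matrix (Fin n) (Fin n) ℂ) (u : Fin n → ℂ) : 0 ≤ vecNormM M u :=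
  Real.sqrt_nonneg _

theorem vecNormM_pos (hM : M.PosDef) {u : Fin n → ℂ} (hu : u ≠ 0) : 0 < vecNormM M u :=
  Real.sqrt_pos.mpr (hM.re_dotProduct_pos hu)

theorem exists_vecNormM_mulVec_le (hM : M.PosDef) (B : Matrix (Fin n) (Fin n) ℂ) :
    ∃ C : ℝ, ∀ u, vecNormM M (B *ᵥ u) ≤ C * vecNormM M u := by
  -- with `M = Sᴴ S`, `‖·‖_M` is the Euclidean norm of `S u`, and `B` becomes `S B S⁻¹`
  obtain ⟨S, hSunit, hS⟩ := hM.exists_isUnit_conjTranspose_mul_self_eq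
  have hSinv : S⁻¹ * S = 1 := nonsing_inv_mul S ((isUnit_iff_isUnit_det S).mp hSunit)
  refine ⟨‖toEuclideanCLM (𝕜 := ℂ) (S * B * S⁻¹)‖, fun u => ?_⟩
  have hconj :
      toLp 2 (S *ᵥ B *ᵥ u) = toEuclideanCLM (𝕜 := ℂ) (S * B * S⁻¹) (toLp 2 (S *ᵥ u)) := by
    rw [toEuclideanCLM_toLp, mulVec_mulVec, mulVec_mulVec, mul_assoc _ S⁻¹, hSinv, mul_one]
  rw [vecNormM_eq_norm_toLp_mulVec hS, vecNormM_eq_norm_toLp_mulVec hS, hconj]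
  exact ContinuousLinearMap.le_opNorm _ _

theorem opNormM_nonneg (M B : Matrix (Fin n) (Fin n) ℂ) : 0 ≤ opNormM M B :=
  Real.sSup_nonneg (by rintro r ⟨u, -, rfl⟩; exact vecNormM_nonneg M _)

theorem vecNormM_mulVec_le (hM : M.PosDef) (B : Matrix (Fin n) (Fin n) ℂ) (v : Fin n → ℂ) :
    vecNormM M (B *ᵥ v) ≤ opNormM M B * vecNormM M v := by
  -- the bound is needed: `sSup` of a set that is not bounded above is the junk value `0`
  obtain ⟨C, hC⟩ := exists_vecNormM_mulVec_le hM B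
  have hbdd : BddAbove {r : ℝ | ∃ u, vecNormM M u = 1 ∧ r = vecNormM M (B *ᵥ u)} := by
    refine ⟨C, ?_⟩
    rintro r ⟨u, hu, rfl⟩
    simpa [hu] using hC u
  rcases eq_or_ne v 0 with rfl | hv
  · simp
  set c := vecNormM M v
  have hc : 0 < c := vecNormM_pos hM hv
  have hunit : vecNormM M ((c⁻¹ : ℂ) • v) = 1 := by
    rw [vecNormM_smul, norm_inv, Complex.norm_real, Real.norm_of_nonneg hc.le,
      inv_mul_cancel₀ hc.ne']
  calc vecNormM M (B *ᵥ v) = c * vecNormM M (B *ᵥ ((c⁻¹ : ℂ) • v)) := by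
        rw [mulVec_smul, vecNormM_smul, norm_inv, Complex.norm_real, Real.norm_of_nonneg hc.le,
          mul_inv_cancel_left₀ hc.ne']
    _ ≤ c * opNormM M B := mul_le_mul_of_nonneg_left (le_csSup hbdd ⟨_, hunit, rfl⟩) hc.le
    _ = opNormM M B * c := mul_comm _ _

theorem norm_sq_le_of_smul_eq_smul_mulVec (hM : M.PosDef) {B₁ B₂ : Matrix (Fin n) (Fin n) ℂ}
    {u v : Fin n → ℂ} (huv : u ≠ 0 ∨ v ≠ 0) {μ c₁ c₂ : ℂ} (h₁ : μ • u = c₁ • B₁ *ᵥ v)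
    (h₂ : μ • v = c₂ • B₂ *ᵥ u) :
    ‖μ‖ ^ 2 ≤ ‖c₁‖ * opNormM M B₁ * (‖c₂‖ * opNormM M B₂) := by
  have bound {B : Matrix (Fin n) (Fin n) ℂ} {c : ℂ} {w w' : Fin n → ℂ} (h : μ • w = c • B *ᵥ w') :
      ‖μ‖ * vecNormM M w ≤ ‖c‖ * opNormM M B * vecNormM M w' := by
    rw [← vecNormM_smul, h, vecNormM_smul, mul_assoc]
    exact mul_le_mul_of_nonneg_left (vecNormM_mulVec_le hM B w') (norm_nonneg c)
  refine sq_le_mul_of_mul_le_mul_of_mul_le_mul (norm_nonneg μ)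
    (mul_nonneg (norm_nonneg _) (opNormM_nonneg M B₁))
    (mul_nonneg (norm_nonneg _) (opNormM_nonneg M B₂)) ?_ (bound h₁) (bound h₂)
  exact huv.imp (vecNormM_pos hM) (vecNormM_pos hM)

end vecNormM

/-- every generalized eigenvalue `λ` of `A = [[H_T,M₁],[M₂,H_P]]`
with respect to the block-diagonal preconditioner `Π_J = [[H_T,0],[0,H_P]]`
satisfies `|λ-1| ≤ √(C_T C_P (γ-1)(1-Λ/𝓜))`. -/
theorem stmt6 {n : ℕ} (M HT HP : Matrix (Fin n) (Fin n) ℂ) (hM : M.PosDef)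
    (hHT : IsUnit HT) (hHP : IsUnit HP)
    (CT CP γ Λ 𝓜 : ℝ) (hγ : 1 < γ) (hΛ : 0 < Λ) (hΛ𝓜 : Λ < 𝓜)
    (hCT : opNormM M (HT⁻¹ * M) ≤ CT) (hCP : opNormM M (HP⁻¹ * M) ≤ CP)
    (lam : ℂ)
    (hlam : ∃ x : (Fin n ⊕ Fin n) → ℂ, x ≠ 0 ∧
      (Matrix.fromBlocks HT ((Complex.I * (((γ : ℂ) - 1) / (γ : ℂ))) • M)
          (((γ * (1 - Λ / 𝓜) : ℝ) : ℂ) • M) HP).mulVec x =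
        lam • (Matrix.fromBlocks HT 0 0 HP).mulVec x) :
    ‖lam - 1‖ ≤ Real.sqrt (CT * CP * (γ - 1) * (1 - Λ / 𝓜)) := by
  obtain ⟨x, hx, heig⟩ := hlam
  rw [← Sum.elim_comp_inl_inr x, fromBlocks_mulVec_eq_smul_fromBlocks_diag_mulVec_iff] at heig
  have huv : x ∘ Sum.inl ≠ 0 ∨ x ∘ Sum.inr ≠ 0 := by
    contrapose! hx
    rw [← Sum.elim_comp_inl_inr x, hx.1, hx.2, Sum.elim_zero_zero]
  have hsq := norm_sq_le_of_smul_eq_smul_mulVec hM huv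
    (by simpa only [Matrix.mul_smul, smul_mulVec] using
      smul_eq_inv_mul_mulVec_of_mulVec_eq_smul_mulVec hHT heig.1)
    (by simpa only [Matrix.mul_smul, smul_mulVec] using
      smul_eq_inv_mul_mulVec_of_mulVec_eq_smul_mulVec hHP heig.2)
  have hγ₀ : 0 < γ := by linarith
  have hΛ𝓜₁ : 0 ≤ 1 - Λ / 𝓜 := by rw [sub_nonneg, div_le_one (by linarith)]; exact hΛ𝓜.le
  have hc₁ : ‖Complex.I * (((γ : ℂ) - 1) / (γ : ℂ))‖ = (γ - 1) / γ := by
    rw [norm_mul, Complex.norm_I, one_mul, ← Complex.ofReal_one, ← Complex.ofReal_sub,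
      ← Complex.ofReal_div, Complex.norm_real, Real.norm_of_nonneg (by positivity)]
  have hc₂ : ‖((γ * (1 - Λ / 𝓜) : ℝ) : ℂ)‖ = γ * (1 - Λ / 𝓜) := by
    rw [Complex.norm_real, Real.norm_of_nonneg (by positivity)]
  have hCT₀ : 0 ≤ CT := (opNormM_nonneg M _).trans hCT
  refine Real.le_sqrt_of_sq_le (hsq.trans ?_)
  calc _ ≤ (γ - 1) / γ * CT * (γ * (1 - Λ / 𝓜) * CP) := by
        rw [hc₁, hc₂]
        exact mul_le_mul (mul_le_mul_of_nonneg_left hCT (by positivity))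
          (mul_le_mul_of_nonneg_left hCP (by positivity))
          (mul_nonneg (by positivity) (opNormM_nonneg M _)) (by positivity)
    _ = CT * CP * (γ - 1) * (1 - Λ / 𝓜) := by field_simp
end

section
/- With the notation of the previous statement, there exists α > 0 such that for all K ≥ max{ γ(1-Λ/𝓜) - Λ/𝓜 + C_Γ²γ³Λ²/2 + (γ-1)/(2γ) + (γ/2)|1-Λ/𝓜|, (γ-1)/(2γ) + (γ/2)|1-Λ/𝓜| }, and all U = (T,P) ∈ H¹(Ω) × H¹(Ω): Re[a(U,U)] + K(‖T‖² + ‖P‖²) ≥ α(‖T‖²_{H¹} + ‖P‖²_{H¹}). -/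
/-- The real part of the Morse-Ingard form `a(U,U)` for `U = (T,P)`, expressed in
terms of the `L²` norms `‖T‖, ‖P‖`, the gradient norms `gradN T, gradN P`, the
boundary norm `bdryN P = ‖P‖_{Γ_a}`, and the `L²` inner product (paper's
`(P,T) = ∫ P T̄` equals Mathlib's `inner T P`). -/
noncomputable def ReMorseIngard {V : Type*} [NormedAddCommGroup V]
    [InnerProductSpace ℂ V] (γ Λ 𝓜 : ℝ) (gradN bdryN : V → ℝ) (T P : V) : ℝ :=
  𝓜 * (gradN T) ^ 2 + (gradN P) ^ 2 - (γ * (1 - Λ / 𝓜) - Λ / 𝓜) * ‖P‖ ^ 2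
    - γ ^ ((3 : ℝ) / 2) * Λ * (bdryN P) ^ 2
    + (Complex.I * (((γ : ℂ) - 1) / (γ : ℂ)) * (inner ℂ T P : ℂ) +
        ((γ * (1 - Λ / 𝓜) : ℝ) : ℂ) * (inner ℂ P T : ℂ)).re

/-!
Write `z = ⟪T, P⟫`, `c₁ = (γ - 1)/γ` and `c₂ = γ(1 - Λ/𝓜) > 0`. The coupling term of `Re a(U,U)` is
`Re((c₂ + c₁ i) z) ≥ -√(c₁² + c₂²) (‖T‖² + ‖P‖²)/2`, while the threshold on `K` supplies
`(c₁ + c₂)/2 (‖T‖² + ‖P‖²)`; since `√(c₁² + c₂²) < c₁ + c₂`, a positive multiple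
`δ = (c₁ + c₂ - √(c₁² + c₂²))/2` of `‖T‖² + ‖P‖²` survives. The boundary term is absorbed, by the
trace inequality and Young's inequality, into `½‖∇P‖² + C_Γ²γ³Λ²/2 ‖P‖²`, so `α = min(𝓜, 1/2, δ)`.
-/

open Complex

lemma Complex.re_I_mul_add_mul_conj (a b : ℝ) (z : ℂ) :
    (I * a * z + b * (starRingEnd ℂ) z).re = ((b + a * I) * z).re := by
  simp only [add_re, add_im, mul_re, mul_im, I_re, I_im, ofReal_re, ofReal_im, conj_re, conj_im]
  ring

lemma Complex.neg_norm_mul_le_re_mul (w z : ℂ) : -(‖w‖ * ‖z‖) ≤ (w * z).re := by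
  rw [← norm_mul]
  exact neg_le_of_abs_le (abs_re_le_norm _)

lemma Complex.norm_ofReal_add_mul_I_lt {x y : ℝ} (hx : 0 < x) (hy : 0 < y) :
    ‖(x : ℂ) + y * I‖ < x + y := by
  rw [norm_add_mul_I, Real.sqrt_lt' (by positivity)]
  nlinarith [mul_pos hx hy]

lemma neg_le_re_mul_inner {V : Type*} [NormedAddCommGroup V] [InnerProductSpace ℂ V]
    (w : ℂ) (T P : V) : -(‖w‖ * (‖T‖ ^ 2 + ‖P‖ ^ 2) / 2) ≤ (w * inner ℂ T P).re := by
  have hTP : ‖T‖ * ‖P‖ ≤ (‖T‖ ^ 2 + ‖P‖ ^ 2) / 2 := by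
    linarith [two_mul_le_add_sq ‖T‖ ‖P‖]
  calc -(‖w‖ * (‖T‖ ^ 2 + ‖P‖ ^ 2) / 2)
      ≤ -(‖w‖ * ‖inner ℂ T P‖) := by
        rw [neg_le_neg_iff, mul_div_assoc]
        exact mul_le_mul_of_nonneg_left ((norm_inner_le_norm T P).trans hTP) (norm_nonneg w)
    _ ≤ (w * inner ℂ T P).re := Complex.neg_norm_mul_le_re_mul _ _

lemma mul_sq_le_of_sq_le_mul {b g p C c : ℝ} (hc : 0 ≤ c) (h : b ^ 2 ≤ C * g * p) :
    c * b ^ 2 ≤ g ^ 2 / 2 + (C * c) ^ 2 * p ^ 2 / 2 :=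
  calc c * b ^ 2 ≤ c * (C * g * p) := mul_le_mul_of_nonneg_left h hc
    _ ≤ g ^ 2 / 2 + (C * c) ^ 2 * p ^ 2 / 2 := by nlinarith [sq_nonneg (g - C * c * p)]

lemma Real.rpow_three_halves_sq {x : ℝ} (hx : 0 ≤ x) : (x ^ ((3 : ℝ) / 2)) ^ 2 = x ^ 3 := by
  rw [← Real.rpow_natCast, ← Real.rpow_mul hx]
  norm_num

lemma reMorseIngard_ge {V : Type*} [NormedAddCommGroup V] [InnerProductSpace ℂ V]
    {γ Λ 𝓜 CΓ : ℝ} {gradN bdryN : V → ℝ} (hγ : 0 ≤ γ) (hΛ : 0 ≤ Λ)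
    (htrace : ∀ P : V, (bdryN P) ^ 2 ≤ CΓ * gradN P * ‖P‖) (T P : V) :
    𝓜 * (gradN T) ^ 2 + (gradN P) ^ 2 / 2
      - (γ * (1 - Λ / 𝓜) - Λ / 𝓜 + CΓ ^ 2 * γ ^ 3 * Λ ^ 2 / 2) * ‖P‖ ^ 2
      - ‖((γ * (1 - Λ / 𝓜) : ℝ) : ℂ) + ((γ - 1) / γ : ℝ) * I‖ * (‖T‖ ^ 2 + ‖P‖ ^ 2) / 2
      ≤ ReMorseIngard γ Λ 𝓜 gradN bdryN T P := by
  have hcoupling : (I * (((γ : ℂ) - 1) / (γ : ℂ)) * inner ℂ T P +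
      ((γ * (1 - Λ / 𝓜) : ℝ) : ℂ) * inner ℂ P T).re =
      ((((γ * (1 - Λ / 𝓜) : ℝ) : ℂ) + ((γ - 1) / γ : ℝ) * I) * inner ℂ T P).re := by
    rw [← inner_conj_symm P T, ← Complex.re_I_mul_add_mul_conj]
    push_cast
    rfl
  have hboundary : γ ^ ((3 : ℝ) / 2) * Λ * (bdryN P) ^ 2 ≤
      (gradN P) ^ 2 / 2 + CΓ ^ 2 * γ ^ 3 * Λ ^ 2 / 2 * ‖P‖ ^ 2 := by
    have := mul_sq_le_of_sq_le_mul (c := γ ^ ((3 : ℝ) / 2) * Λ) (by positivity) (htrace P)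
    rw [mul_pow, mul_pow, Real.rpow_three_halves_sq hγ] at this
    linarith
  rw [ReMorseIngard, hcoupling]
  linarith [neg_le_re_mul_inner ((((γ * (1 - Λ / 𝓜) : ℝ) : ℂ) + ((γ - 1) / γ : ℝ) * I)) T P]

theorem stmt11_general {V : Type*} [NormedAddCommGroup V] [InnerProductSpace ℂ V]
    (γ Λ 𝓜 CΓ : ℝ) (gradN bdryN : V → ℝ)
    (hγ : 1 < γ) (hΛ : 0 < Λ) (hΛ𝓜 : Λ < 𝓜)
    (htrace : ∀ P : V, (bdryN P) ^ 2 ≤ CΓ * gradN P * ‖P‖) :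
    ∃ α : ℝ, 0 < α ∧ ∀ K : ℝ,
      max (γ * (1 - Λ / 𝓜) - Λ / 𝓜 + CΓ ^ 2 * γ ^ 3 * Λ ^ 2 / 2 +
            (γ - 1) / (2 * γ) + (γ / 2) * |1 - Λ / 𝓜|)
          ((γ - 1) / (2 * γ) + (γ / 2) * |1 - Λ / 𝓜|) ≤ K →
      ∀ T P : V,
        ReMorseIngard γ Λ 𝓜 gradN bdryN T P + K * (‖T‖ ^ 2 + ‖P‖ ^ 2) ≥
          α * ((‖T‖ ^ 2 + (gradN T) ^ 2) + (‖P‖ ^ 2 + (gradN P) ^ 2)) := by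
  have h𝓜 : 0 < 𝓜 := hΛ.trans hΛ𝓜
  have hr : 0 < 1 - Λ / 𝓜 := sub_pos.2 ((div_lt_one h𝓜).2 hΛ𝓜)
  have hhalf : (γ - 1) / (2 * γ) + (γ / 2) * |1 - Λ / 𝓜| =
      ((γ - 1) / γ + γ * (1 - Λ / 𝓜)) / 2 := by
    rw [abs_of_pos hr]; field_simp
  set c₁ : ℝ := (γ - 1) / γ
  set c₂ : ℝ := γ * (1 - Λ / 𝓜)
  have hc₁ : 0 < c₁ := div_pos (by linarith) (by linarith)
  have hc₂ : 0 < c₂ := mul_pos (by linarith) hr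
  set s := ‖(c₂ : ℂ) + c₁ * I‖
  set δ := (c₂ + c₁ - s) / 2 with hδ
  have hδ_pos : 0 < δ := by linarith [Complex.norm_ofReal_add_mul_I_lt hc₂ hc₁]
  refine ⟨min 𝓜 (min (1 / 2) δ), by positivity, fun K hK T P => ?_⟩
  rw [hhalf, max_le_iff] at hK
  have hKT : (δ + s / 2) * ‖T‖ ^ 2 ≤ K * ‖T‖ ^ 2 :=
    mul_le_mul_of_nonneg_right (by linarith) (sq_nonneg _)
  have hKP : (c₂ - Λ / 𝓜 + CΓ ^ 2 * γ ^ 3 * Λ ^ 2 / 2 + δ + s / 2) * ‖P‖ ^ 2 ≤ K * ‖P‖ ^ 2 :=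
    mul_le_mul_of_nonneg_right (by linarith) (sq_nonneg _)
  have hα𝓜 : min 𝓜 (min (1 / 2) δ) ≤ 𝓜 := min_le_left _ _
  have hαhalf : min 𝓜 (min (1 / 2) δ) ≤ 1 / 2 := (min_le_right _ _).trans (min_le_left _ _)
  have hαδ : min 𝓜 (min (1 / 2) δ) ≤ δ := (min_le_right _ _).trans (min_le_right _ _)
  have hlower : 𝓜 * (gradN T) ^ 2 + (gradN P) ^ 2 / 2
      - (c₂ - Λ / 𝓜 + CΓ ^ 2 * γ ^ 3 * Λ ^ 2 / 2) * ‖P‖ ^ 2 - s * (‖T‖ ^ 2 + ‖P‖ ^ 2) / 2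
      ≤ ReMorseIngard γ Λ 𝓜 gradN bdryN T P :=
    reMorseIngard_ge (by linarith) hΛ.le htrace T P
  linarith [mul_le_mul_of_nonneg_right hα𝓜 (sq_nonneg (gradN T)),
    mul_le_mul_of_nonneg_right hαhalf (sq_nonneg (gradN P)),
    mul_le_mul_of_nonneg_right hαδ (sq_nonneg ‖T‖), mul_le_mul_of_nonneg_right hαδ (sq_nonneg ‖P‖)]

/-- the Gårding inequality for the Morse-Ingard form: there is
`α > 0` such that for all `K` at least the stated maximum and all `U = (T,P)`,
`Re a(U,U) + K(‖T‖² + ‖P‖²) ≥ α(‖T‖²_{H¹} + ‖P‖²_{H¹})`, where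
`‖u‖²_{H¹} = ‖u‖² + ‖∇u‖²`. -/
theorem stmt11 {V : Type*} [NormedAddCommGroup V] [InnerProductSpace ℂ V]
    (γ Λ 𝓜 CΓ : ℝ) (gradN bdryN : V → ℝ)
    (hγ : 1 < γ) (hΛ : 0 < Λ) (hΛ𝓜 : Λ < 𝓜) (h𝓜 : 𝓜 ≤ 1) (hCΓ : 0 < CΓ)
    (hgrad : ∀ u, 0 ≤ gradN u) (hbdry : ∀ u, 0 ≤ bdryN u)
    (htrace : ∀ P : V, (bdryN P) ^ 2 ≤ CΓ * gradN P * ‖P‖) :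
    ∃ α : ℝ, 0 < α ∧ ∀ K : ℝ,
      max (γ * (1 - Λ / 𝓜) - Λ / 𝓜 + CΓ ^ 2 * γ ^ 3 * Λ ^ 2 / 2 +
            (γ - 1) / (2 * γ) + (γ / 2) * |1 - Λ / 𝓜|)
          ((γ - 1) / (2 * γ) + (γ / 2) * |1 - Λ / 𝓜|) ≤ K →
      ∀ T P : V,
        ReMorseIngard γ Λ 𝓜 gradN bdryN T P + K * (‖T‖ ^ 2 + ‖P‖ ^ 2) ≥
          α * ((‖T‖ ^ 2 + (gradN T) ^ 2) + (‖P‖ ^ 2 + (gradN P) ^ 2)) :=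
  stmt11_general γ Λ 𝓜 CΓ gradN bdryN hγ hΛ hΛ𝓜 htrace
end

section
/- Let M be Hermitian positive definite and K Hermitian positive semidefinite, both n×n complex, 𝓜 > 0, and H_T = 𝓜K - iM. Then every eigenvalue λ of H_T⁻¹M satisfies |λ| ≤ 1. (Indeed, if H_T x = (1/λ) M x then 𝓜 x*Kx - i x*Mx = (1/λ) x*Mx, so |1/λ| ≥ 1.) -/
open Matrix
open scoped ComplexOrder

namespace Matrix

variable {ι : Type*} [Fintype ι]

lemma isUnit_det_of_star_dotProduct_mulVec_ne_zero [DecidableEq ι] {K : Type*} [Field K] [Star K]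
    {A : Matrix ι ι K} (hA : ∀ x, x ≠ 0 → star x ⬝ᵥ A *ᵥ x ≠ 0) : IsUnit A.det := by
  refine isUnit_iff_ne_zero.2 fun h => ?_
  obtain ⟨x, hx, hAx⟩ := exists_mulVec_eq_zero_iff.2 h
  exact hA x hx (by rw [hAx, dotProduct_zero])

lemma mulVec_eq_smul_mulVec_of_nonsing_inv_mul [DecidableEq ι] {R : Type*} [CommRing R]
    {A B : Matrix ι ι R} (hA : IsUnit A.det) {x : ι → R} {lam : R} (h : (A⁻¹ * B) *ᵥ x = lam • x) :
    B *ᵥ x = lam • A *ᵥ x := by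
  simpa only [mulVec_mulVec, mul_nonsing_inv_cancel_left (A := A) B hA, mulVec_smul] using
    congrArg (A *ᵥ ·) h

/-- An eigenvector gives `xᴴ B x = λ xᴴ A x`; the domination hypothesis also makes `A` invertible,
so `A⁻¹` is the genuine inverse rather than the junk value `0`. -/
theorem norm_le_one_of_nonsing_inv_mul_mulVec_eq_smul [DecidableEq ι] {𝕜 : Type*} [RCLike 𝕜]
    {A B : Matrix ι ι 𝕜} (hB : ∀ x, x ≠ 0 → star x ⬝ᵥ B *ᵥ x ≠ 0)
    (hBA : ∀ x, ‖star x ⬝ᵥ B *ᵥ x‖ ≤ ‖star x ⬝ᵥ A *ᵥ x‖)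
    {lam : 𝕜} {x : ι → 𝕜} (hx : x ≠ 0) (h : (A⁻¹ * B) *ᵥ x = lam • x) : ‖lam‖ ≤ 1 := by
  have hA : IsUnit A.det := isUnit_det_of_star_dotProduct_mulVec_ne_zero fun y hy =>
    norm_pos_iff.1 ((norm_pos_iff.2 (hB y hy)).trans_le (hBA y))
  have hform : star x ⬝ᵥ B *ᵥ x = lam * (star x ⬝ᵥ A *ᵥ x) := by
    rw [mulVec_eq_smul_mulVec_of_nonsing_inv_mul hA h, dotProduct_smul, smul_eq_mul]
  have hpos : 0 < ‖star x ⬝ᵥ B *ᵥ x‖ := norm_pos_iff.2 (hB x hx)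
  refine le_of_mul_le_mul_right ?_ hpos
  calc ‖lam‖ * ‖star x ⬝ᵥ B *ᵥ x‖ ≤ ‖lam‖ * ‖star x ⬝ᵥ A *ᵥ x‖ := by gcongr; exact hBA x
    _ = 1 * ‖star x ⬝ᵥ B *ᵥ x‖ := by rw [hform, norm_mul, one_mul]

/-- The form of `c K - i M` has imaginary part `-xᴴ M x`, which controls the form of `M`. -/
lemma norm_star_dotProduct_mulVec_le_smul_sub_I_smul {K M : Matrix ι ι ℂ}
    (hK : K.IsHermitian) (hM : M.IsHermitian) (c : ℝ) (x : ι → ℂ) :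
    ‖star x ⬝ᵥ M *ᵥ x‖ ≤ ‖star x ⬝ᵥ ((c : ℂ) • K - Complex.I • M) *ᵥ x‖ := by
  have hKx : (star x ⬝ᵥ K *ᵥ x).im = 0 := hK.im_star_dotProduct_mulVec_self x
  have hMx : (star x ⬝ᵥ M *ᵥ x).im = 0 := hM.im_star_dotProduct_mulVec_self x
  have him : (star x ⬝ᵥ ((c : ℂ) • K - Complex.I • M) *ᵥ x).im = -(star x ⬝ᵥ M *ᵥ x).re := by
    simp [sub_mulVec, smul_mulVec, dotProduct_sub, dotProduct_smul, hKx]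
  calc ‖star x ⬝ᵥ M *ᵥ x‖ = |(star x ⬝ᵥ M *ᵥ x).re| := (Complex.abs_re_eq_norm.2 hMx).symm
    _ = |(star x ⬝ᵥ ((c : ℂ) • K - Complex.I • M) *ᵥ x).im| := by rw [him, abs_neg]
    _ ≤ _ := Complex.abs_im_le_norm _

end Matrix

theorem stmt16_general {n : ℕ} (K M : Matrix (Fin n) (Fin n) ℂ)
    (hK : K.PosSemidef) (hM : M.PosDef) (𝓜 : ℝ)
    (lam : ℂ)
    (hlam : ∃ x : Fin n → ℂ, x ≠ 0 ∧
      (((𝓜 : ℂ) • K - Complex.I • M)⁻¹ * M).mulVec x = lam • x) :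
    ‖lam‖ ≤ 1 := by
  obtain ⟨x, hx, hx_eig⟩ := hlam
  exact norm_le_one_of_nonsing_inv_mul_mulVec_eq_smul
    (fun y hy => (hM.dotProduct_mulVec_pos hy).ne')
    (norm_star_dotProduct_mulVec_le_smul_sub_I_smul hK.isHermitian hM.isHermitian 𝓜) hx hx_eig

/-- with `H_T = 𝓜 K - i M`, `K` Hermitian positive semidefinite,
`M` Hermitian positive definite and `𝓜 > 0`, every eigenvalue `λ` of `H_T⁻¹ M`
satisfies `|λ| ≤ 1`. -/
theorem stmt16 {n : ℕ} (K M : Matrix (Fin n) (Fin n) ℂ)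
    (hK : K.PosSemidef) (hM : M.PosDef) (𝓜 : ℝ) (h𝓜 : 0 < 𝓜)
    (lam : ℂ)
    (hlam : ∃ x : Fin n → ℂ, x ≠ 0 ∧
      (((𝓜 : ℂ) • K - Complex.I • M)⁻¹ * M).mulVec x = lam • x) :
    ‖lam‖ ≤ 1 :=
  stmt16_general K M hK hM 𝓜 lam hlam
end
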